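/- arXiv:1907.06461 — 2 statements merged into one kernel-verified Lean document; each statement's English description precedes it below -/
import Mathlib

section
/- Let n ≥ 2 and let G : cl(𝔹) → cl(𝔹) be a continuous surjection whose restriction to the open unit ball 𝔹 is a homeomorphism of 𝔹 onto 𝔹. Then G maps ∂𝔹 onto ∂𝔹 and the restriction G : ∂𝔹 → ∂𝔹 is monotone; that is, for every y ∈ ∂𝔹 the preimage G⁻¹(y) is a connected subset of ∂𝔹. -/
open MeasureTheory Metric Set
open scoped ENNReal NNReal

noncomputable section

abbrev Euc (n : ℕ) : Type := EuclideanSpace ℝ (Fin n)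

/-- Operator norm of an `n × n` real matrix, viewed as a linear operator on Euclidean space. -/
noncomputable def opNorm {n : ℕ} (M : Matrix (Fin n) (Fin n) ℝ) : ℝ :=
  ‖LinearMap.toContinuousLinearMap (Matrix.toEuclideanLin M)‖

/-- `g` belongs to the Sobolev class `W^{1,p}(Ω, ℝⁿ)` with weak differential `Dg`:
`g` and `Dg` are locally integrable on `Ω`, the integration-by-parts identity holds against
every smooth compactly supported test function supported in `Ω`, and `|Dg| ∈ L^p(Ω)`. -/
structure MemSobolev {n : ℕ} (p : ℝ) (Ω : Set (Euc n))
    (g : Euc n → Euc n) (Dg : Euc n → Matrix (Fin n) (Fin n) ℝ) : Prop where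
  locInt : ∀ i : Fin n, LocallyIntegrableOn (fun x => g x i) Ω volume
  locIntD : ∀ i j : Fin n, LocallyIntegrableOn (fun x => Dg x i j) Ω volume
  parts : ∀ φ : Euc n → ℝ, ContDiff ℝ ((⊤ : ℕ∞) : WithTop ℕ∞) φ → HasCompactSupport φ →
    tsupport φ ⊆ Ω → ∀ i j : Fin n,
      ∫ x in Ω, g x i * fderiv ℝ φ x (EuclideanSpace.single j 1) =
        - ∫ x in Ω, Dg x i j * φ x
  lp : IntegrableOn (fun x => opNorm (Dg x) ^ p) Ω volume

/-- `g` belongs to the local Sobolev class `W^{1,1}_loc(Ω, ℝⁿ)` with weak differential `Dg`. -/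
structure MemSobolevLoc {n : ℕ} (Ω : Set (Euc n))
    (g : Euc n → Euc n) (Dg : Euc n → Matrix (Fin n) (Fin n) ℝ) : Prop where
  locInt : ∀ i : Fin n, LocallyIntegrableOn (fun x => g x i) Ω volume
  locIntD : ∀ i j : Fin n, LocallyIntegrableOn (fun x => Dg x i j) Ω volume
  parts : ∀ φ : Euc n → ℝ, ContDiff ℝ ((⊤ : ℕ∞) : WithTop ℕ∞) φ → HasCompactSupport φ →
    tsupport φ ⊆ Ω → ∀ i j : Fin n,
      ∫ x in Ω, g x i * fderiv ℝ φ x (EuclideanSpace.single j 1) =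
        - ∫ x in Ω, Dg x i j * φ x

/-- `h : 𝕏 → 𝕐` is a homeomorphism of `𝕏` onto `𝕐` with inverse `f`. -/
structure IsHomeoOn {n : ℕ} (h f : Euc n → Euc n) (𝕏 𝕐 : Set (Euc n)) : Prop where
  mapsTo : Set.MapsTo h 𝕏 𝕐
  mapsTo_inv : Set.MapsTo f 𝕐 𝕏
  left_inv : ∀ x ∈ 𝕏, f (h x) = x
  right_inv : ∀ y ∈ 𝕐, h (f y) = y
  continuousOn : ContinuousOn h 𝕏
  continuousOn_inv : ContinuousOn f 𝕐

/-- The inner distortion function `K_I(·, h)` of a Sobolev map with weak differential `Dh`;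
`D♯h` is the cofactor (adjugate) matrix, given by Cramer's rule `(D♯h)(Dh) = (det Dh)·Id`. -/
noncomputable def innerDistortion {n : ℕ} (Dh : Euc n → Matrix (Fin n) (Fin n) ℝ)
    (x : Euc n) : ℝ≥0∞ :=
  if 0 < (Dh x).det then
    ENNReal.ofReal (opNorm ((Dh x).adjugate) ^ n / (Dh x).det ^ (n - 1))
  else if (Dh x).adjugate = 0 then 1 else ⊤

/-- The open unit ball `𝔹 ⊂ ℝⁿ`. -/
def unitBall (n : ℕ) : Set (Euc n) := Metric.ball 0 1

/-- The slit `I = {(t,0) : 0 ≤ t < 1}`, the first coordinate playing the role of `t`. -/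
def slit (n : ℕ) [NeZero n] : Set (Euc n) :=
  {p | 0 ≤ p 0 ∧ p 0 < 1 ∧ ∀ i : Fin n, i ≠ 0 → p i = 0}

/-- The model inward-cusp ball `𝔹_u = 𝔹 \ {(t,x) : t ≥ 0, |x| ≤ u(t)}`. -/
noncomputable def cuspBall (n : ℕ) [NeZero n] (u : ℝ → ℝ) : Set (Euc n) :=
  Metric.ball 0 1 \
    {p | 0 ≤ p 0 ∧ Real.sqrt (∑ i ∈ Finset.univ.erase (0 : Fin n), p i ^ 2) ≤ u (p 0)}

/-- `u` is a model cusp profile: a strictly increasing continuous surjection of `[0,∞)` onto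
itself, `C¹` on `(0,∞)`, with `u′` increasing on `(0,∞)`, `u′(s) → 0` as `s → 0⁺`, `u(1) = 1`. -/
structure IsModelCusp (u : ℝ → ℝ) : Prop where
  continuousOn : ContinuousOn u (Set.Ici 0)
  contDiffOn : ContDiffOn ℝ 1 u (Set.Ioi 0)
  strictMonoOn : StrictMonoOn u (Set.Ici 0)
  mapsTo : Set.MapsTo u (Set.Ici 0) (Set.Ici 0)
  surjOn : Set.SurjOn u (Set.Ici 0) (Set.Ici 0)
  deriv_mono : MonotoneOn (deriv u) (Set.Ioi 0)
  deriv_tendsto : Filter.Tendsto (deriv u) (nhdsWithin 0 (Set.Ioi 0)) (nhds 0)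
  one : u 1 = 1

/-- The cusp profile `u(t) = e / exp(t^{-α})` for `t > 0`, and `u(0) = 0`. -/
noncomputable def cuspFun (α : ℝ) (t : ℝ) : ℝ :=
  if 0 < t then Real.exp 1 / Real.exp (t ^ (-α)) else 0

/-- The sphere `S_t = {y ∈ 𝔹_u : |y| = t}` inside the cusp ball. -/
def cuspS (n : ℕ) [NeZero n] (u : ℝ → ℝ) (t : ℝ) : Set (Euc n) :=
  {y ∈ cuspBall n u | ‖y‖ = t}

/-- The boundary circle `C_t = {y ∈ ∂𝔹_u : |y| = t}`. -/
def cuspC (n : ℕ) [NeZero n] (u : ℝ → ℝ) (t : ℝ) : Set (Euc n) :=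
  {y ∈ frontier (cuspBall n u) | ‖y‖ = t}

/-- `S′_t = h⁻¹(S_t) ⊆ 𝔹`. -/
def cuspS' (n : ℕ) [NeZero n] (u : ℝ → ℝ) (h : Euc n → Euc n) (t : ℝ) : Set (Euc n) :=
  {x ∈ unitBall n | h x ∈ cuspS n u t}

/-- `C′_t = cl(S′_t) ∩ ∂𝔹`. -/
def cuspC' (n : ℕ) [NeZero n] (u : ℝ → ℝ) (h : Euc n → Euc n) (t : ℝ) : Set (Euc n) :=
  closure (cuspS' n u h t) ∩ Metric.sphere (0 : Euc n) 1

/-! For `x ∈ ∂𝔹`, the identity `g ∘ G = id` on `𝔹` passes to the limit at `x` as long as `G x`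
stays in the open set `𝔹` on which `g` is continuous; this would force `x = g (G x) ∈ 𝔹`, so `G`
maps `∂𝔹` into `∂𝔹`. For `y ∈ ∂𝔹` the fibre `G⁻¹(y)` is the intersection over `ε > 0` of the
closures of `g(B(y, ε) ∩ 𝔹)`, a directed family of continua; such an intersection is connected,
because a separation of it by disjoint open sets already separates one member of the family. -/

open Filter Topology

theorem isPreconnected_iInter_of_directed {X : Type*} [TopologicalSpace X] [T2Space X]
    {ι : Type*} [Nonempty ι] {V : ι → Set X} (hV : Directed (· ⊇ ·) V)
    (hc : ∀ i, IsCompact (V i)) (hp : ∀ i, IsPreconnected (V i)) :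
    IsPreconnected (⋂ i, V i) := by
  have hK : IsCompact (⋂ i, V i) := (hc (Classical.arbitrary ι)).of_isClosed_subset
    (isClosed_iInter fun i => (hc i).isClosed) (iInter_subset V _)
  rw [isPreconnected_iff_subset_of_fully_disjoint_closed hK.isClosed]
  intro a b ha hb hab hdisj
  obtain ⟨u, v, hu, hv, hau, hbv, huv⟩ := SeparatedNhds.of_isCompact_isCompact
    (hK.inter_left ha) (hK.inter_left hb) (hdisj.mono inter_subset_left inter_subset_left)
  obtain ⟨i, hi⟩ := exists_subset_nhds_of_isCompact hV hc (U := u ∪ v) fun x hx =>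
    (hu.union hv).mem_nhds ((hab hx).imp (fun h => hau ⟨h, hx⟩) (fun h => hbv ⟨h, hx⟩))
  rcases (hp i).subset_or_subset hu hv huv hi with h | h
  · refine Or.inl fun x hx => (hab hx).resolve_right fun hxb => ?_
    exact huv.ne_of_mem (h (iInter_subset V i hx)) (hbv ⟨hxb, hx⟩) rfl
  · refine Or.inr fun x hx => (hab hx).resolve_left fun hxa => ?_
    exact huv.ne_of_mem (hau ⟨hxa, hx⟩) (h (iInter_subset V i hx)) rfl

section InverseOnInterior

variable {X Y : Type*} [TopologicalSpace X] {G : X → Y} {g : Y → X} {U K : Set X} {V : Set Y}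

theorem mapsTo_diff_compl_of_leftInvOn [TopologicalSpace Y] [T2Space X] (hK : closure U = K)
    (hG : ContinuousOn G K) (hg : ContinuousOn g V) (hV : IsOpen V) (hgV : MapsTo g V U)
    (hinv : LeftInvOn g G U) : MapsTo G (K \ U) Vᶜ := by
  rintro x ⟨hxK, hx⟩ hGx
  have := mem_closure_iff_nhdsWithin_neBot.mp (hK ▸ hxK : x ∈ closure U)
  have hgG : Tendsto (g ∘ G) (𝓝[U] x) (𝓝 (g (G x))) :=
    ((hg.continuousAt (hV.mem_nhds hGx)).comp_continuousWithinAt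
      ((hG x hxK).mono (hK ▸ subset_closure))).tendsto
  have hid : Tendsto (g ∘ G) (𝓝[U] x) (𝓝 x) :=
    tendsto_nhdsWithin_of_tendsto_nhds tendsto_id |>.congr' <|
      eventually_nhdsWithin_of_forall fun z hz => (hinv hz).symm
  exact hx (tendsto_nhds_unique hgG hid ▸ hgV hGx)

theorem closure_image_inter_subset (hK : closure U = K) (hgV : MapsTo g V U) (s : Set Y) :
    closure (g '' (s ∩ V)) ⊆ K :=
  hK ▸ closure_mono (image_subset_iff.mpr fun _ hw => hgV hw.2)

theorem fiber_eq_iInter_closure_image [MetricSpace Y] (hK : closure U = K)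
    (hG : ContinuousOn G K) (hGU : MapsTo G U V) (hgV : MapsTo g V U) (hinv : InvOn g G U V)
    (y : Y) : {x ∈ K | G x = y} = ⋂ ε : Ioi (0 : ℝ), closure (g '' (ball y ε ∩ V)) := by
  ext x
  simp only [mem_sep_iff, mem_iInter, Subtype.forall, mem_Ioi]
  constructor
  · rintro ⟨hxK, rfl⟩ ε hε
    have := mem_closure_iff_nhdsWithin_neBot.mp (hK ▸ hxK : x ∈ closure U)
    refine mem_closure_of_tendsto (b := 𝓝[U] x) (tendsto_nhdsWithin_of_tendsto_nhds tendsto_id) ?_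
    filter_upwards [self_mem_nhdsWithin,
      ((hG x hxK).mono (hK ▸ subset_closure)) (ball_mem_nhds (G x) hε)] with z hzU hz
    exact ⟨G z, ⟨hz, hGU hzU⟩, hinv.1 hzU⟩
  · intro hx
    have hxK := closure_image_inter_subset hK hgV _ (hx 1 one_pos)
    refine ⟨hxK, eq_of_forall_dist_le fun ε hε => ?_⟩
    have hGimage : G '' (g '' (ball y ε ∩ V)) ⊆ ball y ε := by
      rintro _ ⟨_, ⟨w, hw, rfl⟩, rfl⟩
      exact (hinv.2 hw.2).symm ▸ hw.1
    have := closure_mono hGimage <|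
      (hG.mono (closure_image_inter_subset hK hgV _)).image_closure ⟨x, hx ε hε, rfl⟩
    exact mem_closedBall.mp (closure_ball_subset_closedBall this)

theorem isPreconnected_fiber [T2Space X] [NormedAddCommGroup Y] [NormedSpace ℝ Y]
    (hK : closure U = K) (hKc : IsCompact K) (hG : ContinuousOn G K) (hg : ContinuousOn g V)
    (hV : Convex ℝ V) (hGU : MapsTo G U V) (hgV : MapsTo g V U) (hinv : InvOn g G U V) (y : Y) :
    IsPreconnected {x ∈ K | G x = y} := by
  rw [fiber_eq_iInter_closure_image hK hG hGU hgV hinv]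
  refine isPreconnected_iInter_of_directed ?_ (fun ε => ?_) (fun ε => ?_)
  · exact Monotone.directed_ge fun ε δ h =>
      closure_mono (image_mono (inter_subset_inter_left _ (ball_subset_ball h)))
  · exact hKc.of_isClosed_subset isClosed_closure (closure_image_inter_subset hK hgV _)
  · exact (((convex_ball y ε).inter hV).isPreconnected.image g
      (hg.mono inter_subset_right)).closure

end InverseOnInterior

theorem stmt_11_general {n : ℕ} (G g : Euc n → Euc n)
    (hGc : ContinuousOn G (Metric.closedBall (0 : Euc n) 1))
    (hGmaps : Set.MapsTo G (Metric.closedBall (0 : Euc n) 1) (Metric.closedBall (0 : Euc n) 1))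
    (hGsurj : Set.SurjOn G (Metric.closedBall (0 : Euc n) 1) (Metric.closedBall (0 : Euc n) 1))
    (hGhomeo : IsHomeoOn G g (Metric.ball (0 : Euc n) 1) (Metric.ball (0 : Euc n) 1)) :
    Set.MapsTo G (Metric.sphere (0 : Euc n) 1) (Metric.sphere (0 : Euc n) 1) ∧
    Set.SurjOn G (Metric.sphere (0 : Euc n) 1) (Metric.sphere (0 : Euc n) 1) ∧
    ∀ y ∈ Metric.sphere (0 : Euc n) 1,
      {x ∈ Metric.closedBall (0 : Euc n) 1 | G x = y} ⊆ Metric.sphere (0 : Euc n) 1 ∧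
      IsConnected {x ∈ Metric.closedBall (0 : Euc n) 1 | G x = y} := by
  have hcl : closure (ball (0 : Euc n) 1) = closedBall 0 1 := closure_ball 0 one_ne_zero
  have hsphere : closedBall (0 : Euc n) 1 \ ball 0 1 = sphere 0 1 := closedBall_sdiff_ball
  have hinv : InvOn g G (ball 0 1) (ball 0 1) :=
    ⟨fun x hx => hGhomeo.left_inv x hx, fun y hy => hGhomeo.right_inv y hy⟩
  have hfiber : ∀ y ∈ sphere (0 : Euc n) 1, {x ∈ closedBall 0 1 | G x = y} ⊆ sphere 0 1 := by
    rintro _ hy x ⟨hx, rfl⟩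
    exact hsphere ▸ ⟨hx, fun hxB => (hsphere ▸ hy).2 (hGhomeo.mapsTo hxB)⟩
  refine ⟨fun x hx => ?_, fun y hy => ?_, fun y hy => ⟨hfiber y hy, ?_⟩⟩
  · rw [← hsphere] at hx ⊢
    exact ⟨hGmaps hx.1, mapsTo_diff_compl_of_leftInvOn hcl hGc hGhomeo.continuousOn_inv
      isOpen_ball hGhomeo.mapsTo_inv hinv.1 hx⟩
  · obtain ⟨x, hx, rfl⟩ := hGsurj (sphere_subset_closedBall hy)
    exact ⟨x, hfiber _ hy ⟨hx, rfl⟩, rfl⟩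
  · obtain ⟨x, hx, rfl⟩ := hGsurj (sphere_subset_closedBall hy)
    exact ⟨⟨x, hx, rfl⟩, isPreconnected_fiber hcl (isCompact_closedBall 0 1) hGc
      hGhomeo.continuousOn_inv (convex_ball 0 1) hGhomeo.mapsTo hGhomeo.mapsTo_inv hinv _⟩

/-- A continuous surjection `G : cl(𝔹) → cl(𝔹)` restricting to a
homeomorphism of `𝔹` onto `𝔹` maps `∂𝔹` onto `∂𝔹` and is monotone on `∂𝔹`: the preimage of
each boundary point is a connected subset of `∂𝔹`. -/
theorem stmt_11 {n : ℕ} (hn : 2 ≤ n) (G g : Euc n → Euc n)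
    (hGc : ContinuousOn G (Metric.closedBall (0 : Euc n) 1))
    (hGmaps : Set.MapsTo G (Metric.closedBall (0 : Euc n) 1) (Metric.closedBall (0 : Euc n) 1))
    (hGsurj : Set.SurjOn G (Metric.closedBall (0 : Euc n) 1) (Metric.closedBall (0 : Euc n) 1))
    (hGhomeo : IsHomeoOn G g (Metric.ball (0 : Euc n) 1) (Metric.ball (0 : Euc n) 1)) :
    Set.MapsTo G (Metric.sphere (0 : Euc n) 1) (Metric.sphere (0 : Euc n) 1) ∧
    Set.SurjOn G (Metric.sphere (0 : Euc n) 1) (Metric.sphere (0 : Euc n) 1) ∧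
    ∀ y ∈ Metric.sphere (0 : Euc n) 1,
      {x ∈ Metric.closedBall (0 : Euc n) 1 | G x = y} ⊆ Metric.sphere (0 : Euc n) 1 ∧
      IsConnected {x ∈ Metric.closedBall (0 : Euc n) 1 | G x = y} :=
  stmt_11_general G g hGc hGmaps hGsurj hGhomeo
end
end

section
/- Let n ≥ 3, let 𝔹_u be a model inward-cusp ball, let h : 𝔹 → 𝔹_u be a homeomorphism in W^{1,n}(𝔹, ℝⁿ), and let H : cl(𝔹) → cl(𝔹_u) be a continuous extension of h. Then for every 0 < t < 1 one has H(C′_t) = C_t, where S_t = {y ∈ 𝔹_u : |y| = t}, C_t = {y ∈ ∂𝔹_u : |y| = t}, S′_t = h⁻¹(S_t), and C′_t = cl(S′_t) ∩ ∂𝔹. -/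
open MeasureTheory Metric Set
open scoped ENNReal NNReal

noncomputable section

/-! The statement is topological. If `x ∈ ∂𝔹` and `H x` lay in `𝔹_u`, continuity of `h⁻¹` at
`H x` would give `x = h⁻¹ (H x) ∈ 𝔹`; so `H` maps `cl(h⁻¹ S_t) ∩ ∂𝔹` into `cl S_t ∩ ∂𝔹_u`.
Conversely `H (cl (h⁻¹ S_t))` is compact, hence closed, and contains `S_t`, so each point of
`cl S_t ∩ ∂𝔹_u` is the image of a point which cannot lie in `𝔹`. It remains to see
`cl S_t ∩ ∂𝔹_u = C_t`: a boundary point `y = (y₀, y')` with `|y| = t` satisfies `y₀ > 0` and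
`|y'| = u(y₀)`, and along the arc of the sphere `|p| = t` through `y` on which `p₀` decreases,
`|p'|` grows while `u(p₀)` drops, so the arc runs inside `S_t`. -/

open Filter Topology

section Extension

variable {X Y : Type*} [TopologicalSpace X] [TopologicalSpace Y]
  {U : Set X} {V : Set Y} {h H : X → Y} {f : Y → X}

theorem apply_notMem_of_mem_closure_of_notMem [T2Space X] (hV : IsOpen V) (hf : MapsTo f V U)
    (hfh : LeftInvOn f h U) (hfc : ContinuousOn f V) (hHh : EqOn H h U) {x : X}
    (hx : x ∈ closure U) (hxU : x ∉ U) (hHx : ContinuousWithinAt H U x) : H x ∉ V := by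
  intro hHxV
  have : (𝓝[U] x).NeBot := mem_closure_iff_nhdsWithin_neBot.mp hx
  have hh : Tendsto h (𝓝[U] x) (𝓝 (H x)) :=
    hHx.tendsto.congr' (eventuallyEq_nhdsWithin_of_eqOn hHh)
  have hfh' : Tendsto (f ∘ h) (𝓝[U] x) (𝓝 (f (H x))) :=
    (hfc.continuousAt (hV.mem_nhds hHxV)).tendsto.comp hh
  have hid : Tendsto id (𝓝[U] x) (𝓝 (f (H x))) :=
    hfh'.congr' (eventuallyEq_nhdsWithin_of_eqOn hfh)
  have : x = f (H x) := tendsto_nhds_unique (tendsto_id.mono_left nhdsWithin_le_nhds) hid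
  exact hxU (this ▸ hf hHxV)

theorem image_closure_inter_preimage_inter_frontier [T2Space X] [T2Space Y] (hU : IsOpen U)
    (hUc : IsCompact (closure U)) (hV : IsOpen V) (hh : MapsTo h U V) (hf : MapsTo f V U)
    (hfh : LeftInvOn f h U) (hhf : RightInvOn f h V) (hfc : ContinuousOn f V)
    (hHc : ContinuousOn H (closure U)) (hHh : EqOn H h U) {S : Set Y} (hS : S ⊆ V) :
    H '' (closure (U ∩ h ⁻¹' S) ∩ frontier U) = closure S ∩ frontier V := by
  have hcl : closure (U ∩ h ⁻¹' S) ⊆ closure U := closure_mono inter_subset_left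
  have hSimage : H '' (U ∩ h ⁻¹' S) = S := by
    refine Subset.antisymm ?_ fun y hy => ⟨f y, ⟨hf (hS hy), ?_⟩, ?_⟩
    · rintro _ ⟨x, ⟨hxU, hxS⟩, rfl⟩
      rwa [hHh hxU]
    · rwa [mem_preimage, hhf (hS hy)]
    · rw [hHh (hf (hS hy)), hhf (hS hy)]
  rw [hU.frontier_eq, hV.frontier_eq]
  apply Subset.antisymm
  · rintro _ ⟨x, ⟨hxS, hxU, hxU'⟩, rfl⟩
    have hHxS : H x ∈ closure S := hSimage ▸ (hHc.mono hcl).image_closure ⟨x, hxS, rfl⟩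
    exact ⟨hHxS, closure_mono hS hHxS, apply_notMem_of_mem_closure_of_notMem hV hf hfh hfc hHh
      hxU hxU' ((hHc x hxU).mono subset_closure)⟩
  · rintro y ⟨hyS, -, hyV⟩
    have hK : IsClosed (H '' closure (U ∩ h ⁻¹' S)) :=
      ((hUc.of_isClosed_subset isClosed_closure hcl).image_of_continuousOn
        (hHc.mono hcl)).isClosed
    have hSK : S ⊆ H '' closure (U ∩ h ⁻¹' S) :=
      hSimage.symm.subset.trans (image_mono subset_closure)
    obtain ⟨x, hxS, rfl⟩ := closure_minimal hSK hK hyS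
    refine ⟨x, ⟨hxS, hcl hxS, fun hxU => hyV ?_⟩, rfl⟩
    rw [hHh hxU]
    exact hh hxU

end Extension

section Cusp

variable {n : ℕ} [NeZero n] {u : ℝ → ℝ}

/-- `|x|` for `p = (t, x)`. -/
def transverseNorm (p : Euc n) : ℝ := √(∑ i ∈ Finset.univ.erase (0 : Fin n), p i ^ 2)

theorem transverseNorm_nonneg (p : Euc n) : 0 ≤ transverseNorm p := Real.sqrt_nonneg _

def cuspCore (n : ℕ) [NeZero n] (u : ℝ → ℝ) : Set (Euc n) :=
  {p | 0 ≤ p 0 ∧ transverseNorm p ≤ u (p 0)}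

theorem cuspBall_eq_ball_diff_cuspCore : cuspBall n u = ball 0 1 \ cuspCore n u := rfl

theorem continuous_transverseNorm : Continuous (transverseNorm (n := n)) := by
  unfold transverseNorm; fun_prop

theorem norm_sq_eq_sq_add_transverseNorm_sq (p : Euc n) :
    ‖p‖ ^ 2 = p 0 ^ 2 + transverseNorm p ^ 2 := by
  rw [EuclideanSpace.real_norm_sq_eq, transverseNorm,
    Real.sq_sqrt (Finset.sum_nonneg fun i _ => sq_nonneg _),
    ← Finset.add_sum_erase _ _ (Finset.mem_univ 0)]

theorem transverseNorm_smul_add_smul_single (a b : ℝ) (p : Euc n) :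
    transverseNorm (a • p + b • EuclideanSpace.single 0 1) = |a| * transverseNorm p := by
  have hcoord : ∀ i ∈ Finset.univ.erase (0 : Fin n),
      (a • p + b • EuclideanSpace.single 0 1 : Euc n) i ^ 2 = a ^ 2 * p i ^ 2 := by
    intro i hi
    simp [Finset.ne_of_mem_erase hi, mul_pow]
  rw [transverseNorm, transverseNorm, Finset.sum_congr rfl hcoord, ← Finset.mul_sum,
    Real.sqrt_mul (sq_nonneg a), Real.sqrt_sq_eq_abs]

theorem IsModelCusp.map_zero (hu : IsModelCusp u) : u 0 = 0 := by
  obtain ⟨s, hs, hus⟩ := hu.surjOn (mem_Ici.mpr le_rfl : (0 : ℝ) ∈ Ici 0)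
  rcases (mem_Ici.mp hs).eq_or_lt with rfl | hs0
  · exact hus
  · have h0 : 0 ≤ u 0 := hu.mapsTo (mem_Ici.mpr le_rfl)
    linarith [hu.strictMonoOn (mem_Ici.mpr le_rfl) hs hs0]

theorem IsModelCusp.pos_of_pos (hu : IsModelCusp u) {s : ℝ} (hs : 0 < s) : 0 < u s :=
  hu.map_zero ▸ hu.strictMonoOn (mem_Ici.mpr le_rfl) hs.le hs

theorem IsModelCusp.continuous_comp_max_zero (hu : IsModelCusp u) :
    Continuous fun s => u (max s 0) :=
  hu.continuousOn.comp_continuous (continuous_id.max continuous_const) fun s => le_max_right s 0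

theorem IsModelCusp.isClosed_cuspCore (hu : IsModelCusp u) : IsClosed (cuspCore n u) := by
  have hcoord : Continuous fun p : Euc n => p 0 := by fun_prop
  have : cuspCore n u = {p | 0 ≤ p 0} ∩ {p | transverseNorm p ≤ u (max (p 0) 0)} := by
    ext p
    simp only [cuspCore, mem_ofPred_eq, mem_inter_iff]
    constructor
    · rintro ⟨hp, hpu⟩; exact ⟨hp, by rwa [max_eq_left hp]⟩
    · rintro ⟨hp, hpu⟩; exact ⟨hp, by rwa [max_eq_left hp] at hpu⟩
  rw [this]
  exact (isClosed_le continuous_const hcoord).inter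
    (isClosed_le continuous_transverseNorm (hu.continuous_comp_max_zero.comp hcoord))

theorem IsModelCusp.isOpen_cuspBall (hu : IsModelCusp u) : IsOpen (cuspBall n u) := by
  rw [cuspBall_eq_ball_diff_cuspCore]
  exact isOpen_ball.sdiff hu.isClosed_cuspCore

theorem IsModelCusp.transverseNorm_eq_of_mem_frontier (hu : IsModelCusp u) {y : Euc n}
    (hy : y ∈ frontier (cuspBall n u)) (hy1 : ‖y‖ < 1) :
    0 ≤ y 0 ∧ transverseNorm y = u (y 0) := by
  rw [hu.isOpen_cuspBall.frontier_eq] at hy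
  obtain ⟨hycl, hyV⟩ := hy
  have hyK : y ∈ cuspCore n u := by
    by_contra hyK
    exact hyV ⟨mem_ball_zero_iff.mpr hy1, hyK⟩
  refine ⟨hyK.1, hyK.2.antisymm (not_lt.mp fun hlt => ?_)⟩
  -- `u (max · 0)` extends `u` continuously to `ℝ`, so `O` is an open neighbourhood of `y`
  -- inside the cusp.
  set O := {p : Euc n | transverseNorm p < u (max (p 0) 0)}
  have hO : IsOpen O :=
    isOpen_lt continuous_transverseNorm (hu.continuous_comp_max_zero.comp (by fun_prop))
  have hOK : O ⊆ cuspCore n u := by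
    intro p (hp : transverseNorm p < u (max (p 0) 0))
    rcases le_or_gt 0 (p 0) with hp0 | hp0
    · exact ⟨hp0, by simpa only [max_eq_left hp0] using hp.le⟩
    · have : transverseNorm p < 0 := by simpa only [max_eq_right hp0.le, hu.map_zero] using hp
      exact absurd this (transverseNorm_nonneg p).not_gt
  have hyO : y ∈ O := by simpa only [O, mem_ofPred_eq, max_eq_left hyK.1] using hlt
  have hdisj : Disjoint O (cuspBall n u) := disjoint_left.mpr fun p hp hpV => hpV.2 (hOK hp)
  exact disjoint_left.mp (hdisj.closure_right hO) hyO hycl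

theorem IsModelCusp.mem_closure_cuspS (hu : IsModelCusp u) {t : ℝ} (ht0 : 0 < t) (ht1 : t < 1)
    {y : Euc n} (hy0' : 0 ≤ y 0) (hyu : transverseNorm y = u (y 0)) (hyt : ‖y‖ = t) :
    y ∈ closure (cuspS n u t) := by
  set r := transverseNorm y
  have hyr : y 0 ^ 2 + r ^ 2 = t ^ 2 := by rw [← hyt, norm_sq_eq_sq_add_transverseNorm_sq]
  have hy0 : 0 < y 0 := by
    refine hy0'.lt_of_ne fun h => ?_
    rw [← h, hu.map_zero] at hyu
    rw [← h, hyu] at hyr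
    nlinarith
  have hr : 0 < r := hyu ▸ hu.pos_of_pos hy0
  set c : ℝ → ℝ := fun s => √(t ^ 2 - s ^ 2) / r
  set w : ℝ → Euc n := fun s => c s • y + (s - c s * y 0) • EuclideanSpace.single 0 1
  have hw : Continuous w := by fun_prop
  have hwy : w (y 0) = y := by
    have : c (y 0) = 1 := by
      simp only [c, ← hyr, add_sub_cancel_left, Real.sqrt_sq hr.le, div_self hr.ne']
    simp [w, this]
  have hwS : MapsTo w (Ioo 0 (y 0)) (cuspS n u t) := by
    rintro s ⟨hs0, hsy⟩
    have hw0 : w s 0 = s := by simp [w]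
    have hwr : transverseNorm (w s) = √(t ^ 2 - s ^ 2) := by
      rw [transverseNorm_smul_add_smul_single, abs_of_nonneg (by positivity),
        div_mul_cancel₀ _ hr.ne']
    have hwt : ‖w s‖ = t := by
      have : ‖w s‖ ^ 2 = t ^ 2 := by
        rw [norm_sq_eq_sq_add_transverseNorm_sq, hw0, hwr, Real.sq_sqrt (by nlinarith)]
        ring
      exact (pow_left_inj₀ (norm_nonneg _) ht0.le two_ne_zero).mp this
    refine ⟨⟨mem_ball_zero_iff.mpr (hwt ▸ ht1), fun hK => ?_⟩, hwt⟩
    have hus : u s < r := hyu ▸ hu.strictMonoOn (mem_Ici.mpr hs0.le) (mem_Ici.mpr hy0.le) hsy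
    have hrs : r < √(t ^ 2 - s ^ 2) := Real.lt_sqrt_of_sq_lt (by nlinarith)
    have hK' : transverseNorm (w s) ≤ u (w s 0) := hK.2
    rw [hw0, hwr] at hK'
    linarith
  have hy0cl : y 0 ∈ closure (Ioo 0 (y 0)) := by
    rw [closure_Ioo hy0.ne]; exact right_mem_Icc.mpr hy0.le
  exact hwy ▸ map_mem_closure hw hy0cl hwS

theorem IsModelCusp.cuspC_eq_closure_cuspS_inter_frontier (hu : IsModelCusp u) {t : ℝ}
    (ht0 : 0 < t) (ht1 : t < 1) :
    cuspC n u t = closure (cuspS n u t) ∩ frontier (cuspBall n u) := by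
  ext y
  constructor
  · rintro ⟨hyfr, hyt⟩
    obtain ⟨hy0, hyu⟩ := hu.transverseNorm_eq_of_mem_frontier hyfr (hyt ▸ ht1)
    exact ⟨hu.mem_closure_cuspS ht0 ht1 hy0 hyu hyt, hyfr⟩
  · rintro ⟨hyS, hyfr⟩
    have hS : closure (cuspS n u t) ⊆ sphere 0 t :=
      closure_minimal (fun p hp => mem_sphere_zero_iff_norm.mpr hp.2) isClosed_sphere
    exact ⟨hyfr, mem_sphere_zero_iff_norm.mp (hS hyS)⟩

end Cusp

theorem stmt_13_general {n : ℕ} [NeZero n] (u : ℝ → ℝ) (hu : IsModelCusp u)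
    (h f : Euc n → Euc n) (hhf : IsHomeoOn h f (unitBall n) (cuspBall n u))
    (H : Euc n → Euc n) (hHc : ContinuousOn H (closure (unitBall n)))
    (hHeq : Set.EqOn H h (unitBall n)) :
    ∀ t : ℝ, 0 < t → t < 1 → H '' cuspC' n u h t = cuspC n u t := by
  intro t ht0 ht1
  have hcompact : IsCompact (closure (unitBall n)) :=
    (closure_ball (0 : Euc n) one_ne_zero).symm ▸ isCompact_closedBall 0 1
  have hS' : cuspS' n u h t = unitBall n ∩ h ⁻¹' cuspS n u t := rfl
  have hsphere : sphere (0 : Euc n) 1 = frontier (unitBall n) :=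
    (frontier_ball 0 one_ne_zero).symm
  rw [hu.cuspC_eq_closure_cuspS_inter_frontier ht0 ht1, cuspC', hS', hsphere]
  exact image_closure_inter_preimage_inter_frontier isOpen_ball hcompact hu.isOpen_cuspBall
    hhf.mapsTo hhf.mapsTo_inv hhf.left_inv hhf.right_inv hhf.continuousOn_inv hHc hHeq
    (sep_subset _ _)

/-- With `h : 𝔹 → 𝔹_u` a `W^{1,n}`-homeomorphism and `H` a continuous
extension, `H(C′_t) = C_t` for every `0 < t < 1`. -/
theorem stmt_13 {n : ℕ} [NeZero n] (hn : 3 ≤ n) (u : ℝ → ℝ) (hu : IsModelCusp u)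
    (h f : Euc n → Euc n) (hhf : IsHomeoOn h f (unitBall n) (cuspBall n u))
    (Dh : Euc n → Matrix (Fin n) (Fin n) ℝ)
    (hSob : MemSobolev (n : ℝ) (unitBall n) h Dh)
    (H : Euc n → Euc n) (hHc : ContinuousOn H (closure (unitBall n)))
    (hHmaps : Set.MapsTo H (closure (unitBall n)) (closure (cuspBall n u)))
    (hHeq : Set.EqOn H h (unitBall n)) :
    ∀ t : ℝ, 0 < t → t < 1 → H '' cuspC' n u h t = cuspC n u t :=
  stmt_13_general u hu h f hhf H hHc hHeq
end
end
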